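/- Let H ∈ ℝ^{m×n} be the incidence matrix of an oriented graph, H̄ = H ⊗ I_d, and let p ∈ ℝ^{dn} be a configuration whose edge vectors e_k = (H̄p)_k are all nonzero, with bearings g_k = e_k/‖e_k‖ and bearing Laplacian L_B = H̄ᵀ blkdiag(π_{g_1},…,π_{g_m}) H̄. If rank(L_B) = dn − d − 1, then the null space of L_B equals the span of the columns of U = 1_n ⊗ I_d together with the vector p, i.e., Null(L_B) = Span{U, p}. -/

import Mathlib

open MeasureTheory Matrix
open scoped Kronecker

/-- The projection operator `π_y = I_d - y yᵀ`. -/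
noncomputable def proj {d : ℕ} (y : Fin d → ℝ) : Matrix (Fin d) (Fin d) ℝ :=
  1 - Matrix.vecMulVec y y

/-- `H` is the incidence matrix of an oriented graph. -/
def IsIncidence {m n : ℕ} (H : Matrix (Fin m) (Fin n) ℝ) : Prop :=
  ∃ head tail : Fin m → Fin n, (∀ k, head k ≠ tail k) ∧
    ∀ k i, H k i = if i = head k then 1 else if i = tail k then -1 else 0

/-- `H̄ = H ⊗ I_d`. -/
noncomputable def Hbar {m n : ℕ} (d : ℕ) (H : Matrix (Fin m) (Fin n) ℝ) :
    Matrix (Fin m × Fin d) (Fin n × Fin d) ℝ :=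
  H ⊗ₖ (1 : Matrix (Fin d) (Fin d) ℝ)

/-- `Π = blkdiag(π_{g_1}, …, π_{g_m})`. -/
noncomputable def blkProj {m d : ℕ} (g : Fin m → Fin d → ℝ) :
    Matrix (Fin m × Fin d) (Fin m × Fin d) ℝ :=
  Matrix.of fun p q => if p.1 = q.1 then proj (g p.1) p.2 q.2 else 0

/-- Euclidean norm of a vector in `ℝ^d` given as `Fin d → ℝ`. -/
noncomputable def enorm {d : ℕ} (v : Fin d → ℝ) : ℝ := Real.sqrt (v ⬝ᵥ v)

/-- The bearing (unit vector) of a nonzero vector. -/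
noncomputable def bearingOf {d : ℕ} (v : Fin d → ℝ) : Fin d → ℝ := (_root_.enorm v)⁻¹ • v

/-- The `k`-th edge vector `e_k = (H̄ p)_k ∈ ℝ^d` of a configuration `p`. -/
noncomputable def edgeVec {m n d : ℕ} (H : Matrix (Fin m) (Fin n) ℝ)
    (p : Fin n × Fin d → ℝ) (k : Fin m) : Fin d → ℝ :=
  fun i => (Hbar d H).mulVec p (k, i)

/-- The bearing Laplacian `L_B = H̄ᵀ Π H̄` of a configuration `p`. -/
noncomputable def LB {m n : ℕ} {d : ℕ} (H : Matrix (Fin m) (Fin n) ℝ)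
    (p : Fin n × Fin d → ℝ) : Matrix (Fin n × Fin d) (Fin n × Fin d) ℝ :=
  (Hbar d H)ᵀ * blkProj (fun k => bearingOf (edgeVec H p k)) * Hbar d H

/-- `U = 1_n ⊗ I_d`. -/
noncomputable def Umat (n d : ℕ) : Matrix (Fin n × Fin d) (Fin d) ℝ :=
  Matrix.of fun p j => if p.2 = j then 1 else 0

/-!
Translations `U c` lie in the kernel of `L_B` because every row of `H` sums to zero, and `p`
lies in it because `π_{g_k}` annihilates `e_k`. A nonzero edge vector keeps `p` out of
`range U`, so `range U ⊔ span {p}` has dimension `d + 1`, which by rank–nullity is the dimension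
of the kernel. For `n ≤ 1` the translations alone exhaust the space.
-/

lemma Hbar_mulVec_apply {m n d : ℕ} (H : Matrix (Fin m) (Fin n) ℝ)
    (x : Fin n × Fin d → ℝ) (k : Fin m) (i : Fin d) :
    (Hbar d H *ᵥ x) (k, i) = ∑ j, H k j * x (j, i) := by
  simp [Hbar, mulVec, dotProduct, Fintype.sum_prod_type, kroneckerMap_apply, one_apply]

lemma IsIncidence.sum_row_eq_zero {m n : ℕ} {H : Matrix (Fin m) (Fin n) ℝ}
    (hH : IsIncidence H) (k : Fin m) : ∑ j, H k j = 0 := by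
  obtain ⟨head, tail, hne, hval⟩ := hH
  simp [hval, Finset.sum_ite, Finset.filter_eq', (hne k).symm]

lemma Umat_mulVec_apply {n d : ℕ} (c : Fin d → ℝ) (q : Fin n × Fin d) :
    (Umat n d *ᵥ c) q = c q.2 := by
  simp [Umat, mulVec, dotProduct]

lemma proj_mulVec {d : ℕ} (y v : Fin d → ℝ) : proj y *ᵥ v = v - (y ⬝ᵥ v) • y := by
  rw [proj, sub_mulVec, one_mulVec, vecMulVec_mulVec, op_smul_eq_smul]

lemma proj_bearingOf_mulVec_self {d : ℕ} (e : Fin d → ℝ) :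
    proj (bearingOf e) *ᵥ e = 0 := by
  have hsq : _root_.enorm e ^ 2 = e ⬝ᵥ e :=
    Real.sq_sqrt (Fintype.sum_nonneg fun i => mul_self_nonneg (e i))
  by_cases hr : _root_.enorm e = 0
  · rw [hr, sq, zero_mul, eq_comm, dotProduct_self_eq_zero] at hsq
    simp [hsq]
  rw [proj_mulVec, bearingOf, smul_dotProduct, smul_smul, smul_eq_mul, ← hsq]
  field_simp
  simp

lemma blkProj_mulVec_apply {m d : ℕ} (g : Fin m → Fin d → ℝ) (v : Fin m × Fin d → ℝ)
    (k : Fin m) (i : Fin d) :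
    (blkProj g *ᵥ v) (k, i) = (proj (g k) *ᵥ fun j => v (k, j)) i := by
  simp [blkProj, mulVec, dotProduct, Fintype.sum_prod_type]

lemma Hbar_mulVec_Umat_mulVec {m n d : ℕ} {H : Matrix (Fin m) (Fin n) ℝ}
    (hH : ∀ k, ∑ j, H k j = 0) (c : Fin d → ℝ) : Hbar d H *ᵥ (Umat n d *ᵥ c) = 0 := by
  ext ⟨k, i⟩
  simp [Hbar_mulVec_apply, Umat_mulVec_apply, ← Finset.sum_mul, hH k]

lemma blkProj_bearingOf_mulVec_Hbar_mulVec {m n d : ℕ} (H : Matrix (Fin m) (Fin n) ℝ)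
    (p : Fin n × Fin d → ℝ) :
    blkProj (fun k => bearingOf (edgeVec H p k)) *ᵥ (Hbar d H *ᵥ p) = 0 := by
  ext ⟨k, i⟩
  rw [blkProj_mulVec_apply]
  exact congrFun (proj_bearingOf_mulVec_self (edgeVec H p k)) i

lemma LB_mulVec_Umat_mulVec {m n d : ℕ} {H : Matrix (Fin m) (Fin n) ℝ} (hH : IsIncidence H)
    (p : Fin n × Fin d → ℝ) (c : Fin d → ℝ) : LB H p *ᵥ (Umat n d *ᵥ c) = 0 := by
  rw [LB, ← mulVec_mulVec, ← mulVec_mulVec, Hbar_mulVec_Umat_mulVec hH.sum_row_eq_zero,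
    mulVec_zero, mulVec_zero]

lemma LB_mulVec_self {m n d : ℕ} (H : Matrix (Fin m) (Fin n) ℝ) (p : Fin n × Fin d → ℝ) :
    LB H p *ᵥ p = 0 := by
  rw [LB, ← mulVec_mulVec, ← mulVec_mulVec, blkProj_bearingOf_mulVec_Hbar_mulVec, mulVec_zero]

lemma range_Umat_sup_span_le_ker_LB {m n d : ℕ} {H : Matrix (Fin m) (Fin n) ℝ}
    (hH : IsIncidence H) (p : Fin n × Fin d → ℝ) :
    LinearMap.range (Umat n d).mulVecLin ⊔ Submodule.span ℝ {p} ≤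
      LinearMap.ker (LB H p).mulVecLin := by
  rw [sup_le_iff, Submodule.span_singleton_le_iff_mem]
  refine ⟨?_, LB_mulVec_self H p⟩
  rintro _ ⟨c, rfl⟩
  exact LB_mulVec_Umat_mulVec hH p c

lemma Umat_mulVecLin_injective {n d : ℕ} (hn : 0 < n) :
    Function.Injective (Umat n d).mulVecLin := by
  intro c c' h
  funext i
  simpa [Umat_mulVec_apply] using congrFun h (⟨0, hn⟩, i)

lemma Umat_mulVecLin_surjective {n d : ℕ} (hn : n ≤ 1) :
    Function.Surjective (Umat n d).mulVecLin := by
  intro x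
  rcases Nat.eq_zero_or_pos n with rfl | hpos
  · exact ⟨0, Subsingleton.elim _ _⟩
  · refine ⟨fun i => x (⟨0, hpos⟩, i), funext fun q => ?_⟩
    have : Subsingleton (Fin n) := Fin.subsingleton_iff_le_one.mpr hn
    rw [mulVecLin_apply, Umat_mulVec_apply, Subsingleton.elim ⟨0, hpos⟩ q.1]

lemma notMem_range_Umat_mulVecLin {m n d : ℕ} {H : Matrix (Fin m) (Fin n) ℝ}
    (hH : IsIncidence H) {p : Fin n × Fin d → ℝ} {k : Fin m} (hk : edgeVec H p k ≠ 0) :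
    p ∉ LinearMap.range (Umat n d).mulVecLin := by
  rintro ⟨c, rfl⟩
  exact hk (funext fun i => congrFun (Hbar_mulVec_Umat_mulVec hH.sum_row_eq_zero c) (k, i))

lemma LB_eq_zero_of_no_edges {n d : ℕ} (H : Matrix (Fin 0) (Fin n) ℝ)
    (p : Fin n × Fin d → ℝ) :
    LB H p = 0 := by
  rw [LB, Subsingleton.elim (Hbar d H) 0, Matrix.mul_zero]

lemma finrank_ker_mulVecLin_of_rank_eq {ι : Type*} [Fintype ι] [DecidableEq ι]
    (A : Matrix ι ι ℝ) {k : ℕ} (hk : k ≤ Fintype.card ι)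
    (hA : A.rank = Fintype.card ι - k) :
    Module.finrank ℝ (LinearMap.ker A.mulVecLin) = k := by
  have := LinearMap.finrank_range_add_finrank_ker A.mulVecLin
  rw [← Matrix.rank, hA, Module.finrank_fintype_fun_eq_card] at this
  omega

lemma ker_LB_eq {m n d : ℕ} (hd : 2 ≤ d) (hn : 2 ≤ n)
    {H : Matrix (Fin m) (Fin n) ℝ} (hH : IsIncidence H) {p : Fin n × Fin d → ℝ}
    (hnz : ∀ k, edgeVec H p k ≠ 0) (hrank : (LB H p).rank = d * n - d - 1) :
    LinearMap.ker (LB H p).mulVecLin =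
      LinearMap.range (Umat n d).mulVecLin ⊔ Submodule.span ℝ {p} := by
  have hdn : d + 2 ≤ d * n := by nlinarith
  cases m with
  | zero =>
    rw [LB_eq_zero_of_no_edges, rank_zero] at hrank
    omega
  | succ m =>
    have hcard : Fintype.card (Fin n × Fin d) = d * n := by
      rw [Fintype.card_prod, Fintype.card_fin, Fintype.card_fin, Nat.mul_comm]
    have hker := finrank_ker_mulVecLin_of_rank_eq (LB H p) (k := d + 1) (by omega)
      (by rw [hrank, hcard]; omega)
    refine (Submodule.eq_of_le_of_finrank_le (range_Umat_sup_span_le_ker_LB hH p) ?_).symm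
    rw [Submodule.finrank_sup_span_singleton (notMem_range_Umat_mulVecLin hH (hnz 0)),
      LinearMap.finrank_range_of_inj (Umat_mulVecLin_injective (by omega)),
      Module.finrank_fin_fun, hker]

/-- if `rank L_B = dn - d - 1` then the null space of `L_B` is exactly
`Span{U, p}`. -/
theorem statement_5 {d m n : ℕ} (hd : 2 ≤ d)
    (H : Matrix (Fin m) (Fin n) ℝ) (hH : IsIncidence H)
    (p : Fin n × Fin d → ℝ)
    (hnz : ∀ k : Fin m, edgeVec H p k ≠ 0)
    (hrank : (LB H p).rank = d * n - d - 1) :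
    ∀ x : Fin n × Fin d → ℝ,
      (LB H p).mulVec x = 0 ↔ ∃ c : Fin d → ℝ, ∃ a : ℝ, x = (Umat n d).mulVec c + a • p := by
  intro x
  refine ⟨fun hx => ?_, ?_⟩
  · rcases le_or_gt n 1 with hn | hn
    · obtain ⟨c, rfl⟩ := Umat_mulVecLin_surjective (d := d) hn x
      exact ⟨c, 0, by simp⟩
    · replace hx : x ∈ LinearMap.ker (LB H p).mulVecLin := hx
      rw [ker_LB_eq hd hn hH hnz hrank, Submodule.mem_sup] at hx
      obtain ⟨_, ⟨c, rfl⟩, _, hz, rfl⟩ := hx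
      obtain ⟨a, rfl⟩ := Submodule.mem_span_singleton.mp hz
      exact ⟨c, a, rfl⟩
  · rintro ⟨c, a, rfl⟩
    rw [mulVec_add, mulVec_smul, LB_mulVec_Umat_mulVec hH, LB_mulVec_self, smul_zero, add_zero]
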